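/- For all n ≥ 1, all smooth functions F, G : ℝⁿ → ℝ, all κ > 0 and all v ∈ ℝⁿ, the Taylor seminorm is submultiplicative: ‖F·G‖_{κ,T(v)} ≤ ‖F‖_{κ,T(v)} · ‖G‖_{κ,T(v)} (an inequality in [0, +∞]). -/

import Mathlib

/-!
Taking the supremum over the unit polydisc turns the `r`-th summand into `κ^r/r!` times the
operator norm of `D^r F(v)`. The Leibniz rule bounds `‖D^r(FG)(v)‖` by
`∑ᵢ C(r,i) ‖D^i F(v)‖ ‖D^(r-i) G(v)‖`, and `κ^r/r! · C(r,i) = (κ^i/i!) (κ^(r-i)/(r-i)!)`, so the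
`r`-th term of `‖FG‖` is at most the `r`-th term of the Cauchy product of the series for `‖F‖`
and `‖G‖`.
-/

open scoped ENNReal

/-- The Taylor seminorm `‖F‖_{κ,T(v)} = ∑_r (κ^r/r!) sup{|D^r F(v)(u₁,…,u_r)| : ‖u_j‖_∞ ≤ 1}`,
valued in `ℝ≥0∞`.  Here `Fin n → ℝ` carries the sup norm, so `‖u j‖` is `‖u j‖_∞`. -/
noncomputable def taylorSeminorm {n : ℕ} (κ : ℝ) (F : (Fin n → ℝ) → ℝ) (v : Fin n → ℝ) :
    ℝ≥0∞ :=
  ∑' r : ℕ, ENNReal.ofReal (κ ^ r / r.factorial) *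
    ⨆ u ∈ {u : Fin r → Fin n → ℝ | ∀ j, ‖u j‖ ≤ 1},
      ENNReal.ofReal |iteratedFDeriv ℝ r F v u|

open Finset

namespace ContinuousMultilinearMap

variable {𝕜 ι G : Type*} {E : ι → Type*} [NontriviallyNormedField 𝕜] [NormedAlgebra ℝ 𝕜]
  [Fintype ι] [∀ i, NormedAddCommGroup (E i)] [∀ i, NormedSpace 𝕜 (E i)]
  [NormedAddCommGroup G] [NormedSpace 𝕜 G]

theorem opNorm_le_of_unit_norm {f : ContinuousMultilinearMap 𝕜 E G} {C : ℝ} (hC : 0 ≤ C)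
    (hf : ∀ m, (∀ i, ‖m i‖ = 1) → ‖f m‖ ≤ C) : ‖f‖ ≤ C := by
  refine f.opNorm_le_bound hC fun m => ?_
  by_cases! hm : ∃ i, m i = 0
  · obtain ⟨i, hi⟩ := hm
    rw [f.map_coord_zero i hi, norm_zero]
    positivity
  have hnorm : ∀ i, ‖m i‖ ≠ 0 := fun i => norm_ne_zero_iff.2 (hm i)
  have hunit := hf (fun i => algebraMap ℝ 𝕜 ‖m i‖⁻¹ • m i) fun i => by
    simp [norm_smul, inv_mul_cancel₀ (hnorm i)]
  rw [f.map_smul_univ, norm_smul, norm_prod] at hunit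
  simp only [norm_algebraMap', norm_inv, norm_norm, prod_inv_distrib] at hunit
  rwa [inv_mul_le_iff₀ (prod_pos fun i _ => (norm_nonneg _).lt_of_ne' (hnorm i)), mul_comm]
    at hunit

theorem iSup_enorm_apply_eq_enorm (f : ContinuousMultilinearMap 𝕜 E G) :
    ⨆ (m) (_ : ∀ i, ‖m i‖ ≤ 1), ‖f m‖ₑ = ‖f‖ₑ := by
  refine le_antisymm (iSup₂_le fun m hm => ?_) ?_
  · rw [← ofReal_norm, ← ofReal_norm]
    exact ENNReal.ofReal_le_ofReal (f.unit_le_opNorm ((pi_norm_le_iff_of_nonneg zero_le_one).2 hm))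
  generalize hS : (⨆ (m) (_ : ∀ i, ‖m i‖ ≤ 1), ‖f m‖ₑ) = S
  obtain rfl | hS_top := eq_or_ne S ⊤
  · exact le_top
  lift S to NNReal using hS_top
  rw [enorm_le_coe, ← NNReal.coe_le_coe, coe_nnnorm]
  refine opNorm_le_of_unit_norm S.2 fun m hm => ?_
  rw [← coe_nnnorm, NNReal.coe_le_coe, ← enorm_le_coe, ← hS]
  exact le_iSup₂ (f := fun m (_ : ∀ i, ‖m i‖ ≤ 1) => ‖f m‖ₑ) m fun i => (hm i).le

end ContinuousMultilinearMap

/- `Summable.tsum_mul_tsum_eq_tsum_sum_range` does not apply: multiplication on `ℝ≥0∞` is not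
continuous at `(0, ∞)`. -/
theorem ENNReal.tsum_mul_tsum_eq_tsum_sum_range (f g : ℕ → ℝ≥0∞) :
    (∑' n, f n) * ∑' n, g n = ∑' n, ∑ k ∈ range (n + 1), f k * g (n - k) := by
  simp_rw [← Nat.sum_antidiagonal_eq_sum_range_succ fun k l => f k * g l]
  rw [← ENNReal.tsum_mul_right]
  simp_rw [← ENNReal.tsum_mul_left]
  rw [← ENNReal.tsum_prod (f := fun k l => f k * g l),
    ← HasAntidiagonal.sigmaAntidiagonalEquivProd.tsum_eq, ENNReal.tsum_sigma']
  simp only [HasAntidiagonal.sigmaAntidiagonalEquivProd, Equiv.coe_fn_mk, tsum_fintype,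
    univ_eq_attach]
  exact tsum_congr fun n => sum_attach _ fun kl : ℕ × ℕ => f kl.1 * g kl.2

theorem pow_div_factorial_mul_choose (κ : ℝ) {i r : ℕ} (h : i ≤ r) :
    κ ^ r / r.factorial * r.choose i = κ ^ i / i.factorial * (κ ^ (r - i) / (r - i).factorial) := by
  have hpow : κ ^ r = κ ^ i * κ ^ (r - i) := by rw [← pow_add, Nat.add_sub_cancel' h]
  rw [← Nat.choose_mul_factorial_mul_factorial h, hpow]
  have hchoose : (r.choose i : ℝ) ≠ 0 := Nat.cast_ne_zero.2 (Nat.choose_pos h).ne'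
  push_cast
  field_simp

section TaylorTerm

variable {E A : Type*} [NormedAddCommGroup E] [NormedSpace ℝ E] [NormedRing A] [NormedAlgebra ℝ A]

noncomputable def taylorTerm (κ : ℝ) (r : ℕ) (F : E → A) (v : E) : ℝ≥0∞ :=
  ENNReal.ofReal (κ ^ r / r.factorial) * ‖iteratedFDeriv ℝ r F v‖ₑ

theorem taylorTerm_mul_le {κ : ℝ} (hκ : 0 ≤ κ) {r : ℕ} {F G : E → A} (hF : ContDiff ℝ r F)
    (hG : ContDiff ℝ r G) (v : E) :
    taylorTerm κ r (fun w => F w * G w) v ≤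
      ∑ i ∈ range (r + 1), taylorTerm κ i F v * taylorTerm κ (r - i) G v := by
  calc taylorTerm κ r (fun w => F w * G w) v
      ≤ ENNReal.ofReal (κ ^ r / r.factorial * ∑ i ∈ range (r + 1),
          r.choose i * ‖iteratedFDeriv ℝ i F v‖ * ‖iteratedFDeriv ℝ (r - i) G v‖) := by
        rw [taylorTerm, ← ofReal_norm, ← ENNReal.ofReal_mul (by positivity)]
        gcongr
        exact norm_iteratedFDeriv_mul_le hF hG v le_rfl
    _ = ∑ i ∈ range (r + 1), taylorTerm κ i F v * taylorTerm κ (r - i) G v := by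
        rw [mul_sum, ENNReal.ofReal_sum_of_nonneg fun i _ => by positivity]
        refine sum_congr rfl fun i hi => ?_
        rw [← mul_assoc, ← mul_assoc,
          pow_div_factorial_mul_choose κ (Nat.lt_succ_iff.1 (mem_range.1 hi))]
        simp only [taylorTerm, ← ofReal_norm]
        rw [← ENNReal.ofReal_mul (by positivity), ← ENNReal.ofReal_mul (by positivity),
          ← ENNReal.ofReal_mul (by positivity)]
        congr 1
        ring

end TaylorTerm

theorem taylorSeminorm_eq_tsum_taylorTerm {n : ℕ} (κ : ℝ) (F : (Fin n → ℝ) → ℝ) (v : Fin n → ℝ) :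
    taylorSeminorm κ F v = ∑' r, taylorTerm κ r F v := by
  simp only [taylorSeminorm, taylorTerm, Set.mem_ofPred_eq, ← Real.enorm_eq_ofReal_abs,
    ContinuousMultilinearMap.iSup_enorm_apply_eq_enorm]

theorem taylorSeminorm_mul_le_general (n : ℕ) (F G : (Fin n → ℝ) → ℝ)
    (hF : ContDiff ℝ (⊤ : ℕ∞) F) (hG : ContDiff ℝ (⊤ : ℕ∞) G)
    (κ : ℝ) (hκ : 0 < κ) (v : Fin n → ℝ) :
    taylorSeminorm κ (fun w => F w * G w) v ≤
      taylorSeminorm κ F v * taylorSeminorm κ G v := by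
  simp only [taylorSeminorm_eq_tsum_taylorTerm, ENNReal.tsum_mul_tsum_eq_tsum_sum_range]
  exact ENNReal.tsum_le_tsum fun r => taylorTerm_mul_le hκ.le
    (hF.of_le (by exact_mod_cast le_top)) (hG.of_le (by exact_mod_cast le_top)) v

/-- Submultiplicativity of the Taylor seminorm: for smooth `F, G : ℝⁿ → ℝ`,
`‖F·G‖_{κ,T(v)} ≤ ‖F‖_{κ,T(v)} ‖G‖_{κ,T(v)}` (an inequality in `[0,∞]`). -/
theorem taylorSeminorm_mul_le (n : ℕ) (hn : 1 ≤ n) (F G : (Fin n → ℝ) → ℝ)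
    (hF : ContDiff ℝ (⊤ : ℕ∞) F) (hG : ContDiff ℝ (⊤ : ℕ∞) G)
    (κ : ℝ) (hκ : 0 < κ) (v : Fin n → ℝ) :
    taylorSeminorm κ (fun w => F w * G w) v ≤
      taylorSeminorm κ F v * taylorSeminorm κ G v :=
  taylorSeminorm_mul_le_general n F G hF hG κ hκ v
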